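/- arXiv:1606.08279 — 3 statements merged into one kernel-verified Lean document; each statement's English description precedes it below -/
import Mathlib

section
/- Assume D is a block (D is nonzero, every object is a finite direct sum of indecomposables, and the indecomposable objects are path-connected) which is non-degenerate: for every indecomposable X there exists a nonzero non-invertible morphism Y → X or X → Y′ with Y, Y′ indecomposable. Then for every indecomposable object X there exist indecomposable objects X₁, X₂ such that Hom(X, X₁) ≠ 0, Hom(X₁, X₂) ≠ 0, and Hom(X₂, X[1]) ≠ 0. -/
open CategoryTheory CategoryTheory.Limits CategoryTheory.Pretriangulated

universe v u

variable (C : Type u) [Category.{v} C] [Preadditive C] [HasZeroObject C]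
  [HasShift C ℤ] [∀ n : ℤ, (shiftFunctor C n).Additive] [Pretriangulated C]
  [HasFiniteBiproducts C]

/-- An object is indecomposable if it is nonzero and any biproduct decomposition is trivial. -/
def Indec (X : C) : Prop :=
  ¬ IsZero X ∧ ∀ (A B : C), (X ≅ A ⊞ B) → IsZero A ∨ IsZero B

/-- There is a path from `X` to `Y`: a sequence of indecomposables where each consecutive
pair admits a nonzero morphism, or the next one is the shift of the previous one. -/
def HasPath (X Y : C) : Prop :=
  ∃ (n : ℕ) (f : Fin (n + 1) → C), f 0 = X ∧ f (Fin.last n) = Y ∧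
    (∀ i, Indec C (f i)) ∧
    ∀ i : Fin n, (∃ g : f i.castSucc ⟶ f i.succ, g ≠ 0) ∨
      Nonempty (f i.succ ≅ (f i.castSucc)⟦(1 : ℤ)⟧)

/-- Two indecomposables are connected by a sequence of paths and inverse paths. -/
def PathConn (X Y : C) : Prop :=
  ∃ (n : ℕ) (f : Fin (n + 1) → C), f 0 = X ∧ f (Fin.last n) = Y ∧
    (∀ i, Indec C (f i)) ∧
    ∀ i : Fin n, (∃ g : f i.castSucc ⟶ f i.succ, g ≠ 0) ∨
      (∃ g : f i.succ ⟶ f i.castSucc, g ≠ 0) ∨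
      ∃ s : ℤ, Nonempty (f i.succ ≅ (f i.castSucc)⟦s⟧)

/-- Every object is a finite direct sum of indecomposable objects. -/
def EveryObjectDecomposes : Prop :=
  ∀ X : C, ∃ (n : ℕ) (f : Fin n → C), (∀ i, Indec C (f i)) ∧ Nonempty (X ≅ ⨁ f)

/-- `D` is a block: nonzero, Krull-Schmidt-type decomposition, and path-connected. -/
def IsBlock : Prop :=
  (∃ X : C, ¬ IsZero X) ∧ EveryObjectDecomposes C ∧
    ∀ X Y : C, Indec C X → Indec C Y → PathConn C X Y

/-- `add S`: objects isomorphic to finite direct sums of objects of `S`. -/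
def addClosure (S : Set C) : Set C :=
  {X | ∃ (n : ℕ) (f : Fin n → C), (∀ i, f i ∈ S) ∧ Nonempty (X ≅ ⨁ f)}

/-- A `t`-structure `(D^{≤0}, D^{≥0})` on `C`. -/
structure TStruct where
  le : Set C
  ge : Set C
  le_iso : ∀ ⦃X Y : C⦄, (X ≅ Y) → X ∈ le → Y ∈ le
  ge_iso : ∀ ⦃X Y : C⦄, (X ≅ Y) → X ∈ ge → Y ∈ ge
  hom_zero : ∀ ⦃X Y : C⦄, X ∈ le → Y ∈ ge → ∀ f : X ⟶ Y⟦(-1 : ℤ)⟧, f = 0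
  le_shift : ∀ ⦃X : C⦄, X ∈ le → X⟦(1 : ℤ)⟧ ∈ le
  ge_shift : ∀ ⦃X : C⦄, X ∈ ge → X⟦(-1 : ℤ)⟧ ∈ ge
  exists_triangle : ∀ X : C, ∃ (A B : C) (f : A ⟶ X) (g : X ⟶ B⟦(-1 : ℤ)⟧)
      (h : B⟦(-1 : ℤ)⟧ ⟶ A⟦(1 : ℤ)⟧),
      (Triangle.mk f g h ∈ distTriang C) ∧ A ∈ le ∧ B ∈ ge

variable {C}

/-- The heart of a t-structure. -/
def TStruct.heart (t : TStruct C) : Set C := t.le ∩ t.ge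

/-- A t-structure is bounded if every object lies in `D^{≤n} ∩ D^{≥m}` for some `m ≤ n`,
where `X ∈ D^{≤n} := D^{≤0}[-n]` iff `X⟦n⟧ ∈ D^{≤0}`, and similarly for `D^{≥m}`. -/
def TStruct.Bounded (t : TStruct C) : Prop :=
  ∀ X : C, ∃ m n : ℤ, m ≤ n ∧ X⟦n⟧ ∈ t.le ∧ X⟦m⟧ ∈ t.ge

/-- A bounded t-structure is hereditary if `Hom(X, Y⟦n⟧) = 0` for all `X`, `Y` in the heart
and `n ≥ 2`. -/
def TStruct.Hereditary (t : TStruct C) : Prop :=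
  t.Bounded ∧ ∀ ⦃X Y : C⦄, X ∈ t.heart → Y ∈ t.heart →
    ∀ n : ℤ, 2 ≤ n → ∀ f : X ⟶ Y⟦n⟧, f = 0

variable (C)


section Helpers

variable {C}

lemma isZero_shift_iff' (X : C) (n : ℤ) : IsZero (X⟦n⟧) ↔ IsZero X := by
  constructor
  · intro h
    exact IsZero.of_iso ((shiftFunctor C (-n)).map_isZero h) ((shiftEquiv C n).unitIso.app X)
  · intro h
    exact (shiftFunctor C n).map_isZero h

lemma Indec.shift {X : C} (hX : Indec C X) (n : ℤ) : Indec C (X⟦n⟧) := by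
  constructor
  · intro h
    exact hX.1 ((isZero_shift_iff' X n).1 h)
  · intro A B e
    have : PreservesBinaryBiproduct A B (shiftFunctor C (-n)) :=
      preservesBinaryBiproduct_of_preservesBinaryProduct _
    have e2 : X ≅ A⟦-n⟧ ⊞ B⟦-n⟧ :=
      (shiftEquiv C n).unitIso.app X ≪≫ (shiftFunctor C (-n)).mapIso e ≪≫
        (shiftFunctor C (-n)).mapBiprod A B
    rcases hX.2 _ _ e2 with h | h
    · exact Or.inl ((isZero_shift_iff' A (-n)).1 h)
    · exact Or.inr ((isZero_shift_iff' B (-n)).1 h)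

lemma isIso_biprod_inl' {A B : C} (hB : IsZero B) : IsIso (biprod.inl : A ⟶ A ⊞ B) := by
  refine ⟨biprod.fst, by simp, ?_⟩
  apply biprod.hom_ext
  · simp
  · exact hB.eq_of_tgt _ _

lemma isIso_mor₁_of_mor₃_zero (T : Triangle C) (hT : T ∈ distTriang C)
    (hzero : T.mor₃ = 0) (h2 : Indec C T.obj₂) (h1 : ¬ IsZero T.obj₁) : IsIso T.mor₁ := by
  obtain ⟨e, he₁, -⟩ := exists_iso_binaryBiproduct_of_distTriang _ hT hzero
  rcases h2.2 _ _ e with h | h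
  · exact absurd h h1
  · have : IsIso (biprod.inl : T.obj₁ ⟶ T.obj₁ ⊞ T.obj₃) := isIso_biprod_inl' h
    have hm : T.mor₁ = biprod.inl ≫ e.inv := by
      rw [← he₁, Category.assoc, e.hom_inv_id, Category.comp_id]
    rw [hm]
    infer_instance

lemma isIso_of_splitMono_indec {W V : C} (m : W ⟶ V) (u : V ⟶ W) (hu : m ≫ u = 𝟙 W)
    (hV : Indec C V) (hW : ¬ IsZero W) : IsIso m := by
  obtain ⟨Cn, c, d, hT⟩ := Pretriangulated.distinguished_cocone_triangle m
  have hd : d = 0 := by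
    have h1 : d ≫ m⟦(1:ℤ)⟧' = 0 := comp_distTriang_mor_zero₃₁ _ hT
    calc d = d ≫ (m⟦(1:ℤ)⟧' ≫ u⟦(1:ℤ)⟧') := by
            rw [← Functor.map_comp, hu, CategoryTheory.Functor.map_id, Category.comp_id]
      _ = (d ≫ m⟦(1:ℤ)⟧') ≫ u⟦(1:ℤ)⟧' := by rw [Category.assoc]
      _ = 0 := by rw [h1, zero_comp]
  exact isIso_mor₁_of_mor₃_zero _ hT hd hV hW

lemma core_lemma (hdec : EveryObjectDecomposes C) (T : Triangle C)
    (hT : T ∈ distTriang C) (h1 : Indec C T.obj₁) (h2 : Indec C T.obj₂)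
    (hf : T.mor₁ ≠ 0) (hni : ¬ IsIso T.mor₁) :
    ∃ W : C, Indec C W ∧ (∃ p : T.obj₂ ⟶ W, p ≠ 0) ∧
      ∃ q : W ⟶ T.obj₁⟦(1:ℤ)⟧, q ≠ 0 := by
  have h3 : T.mor₃ ≠ 0 := by
    intro h0
    exact hni (isIso_mor₁_of_mor₃_zero T hT h0 h2 h1.1)
  obtain ⟨n, Zf, hZf, ⟨φ⟩⟩ := hdec T.obj₃
  have hex : ∃ i, (biproduct.ι Zf i ≫ φ.inv) ≫ T.mor₃ ≠ 0 := by
    by_contra hc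
    push_neg at hc
    apply h3
    have h0 : φ.inv ≫ T.mor₃ = 0 := by
      apply biproduct.hom_ext'
      intro i
      simpa using hc i
    calc T.mor₃ = φ.hom ≫ (φ.inv ≫ T.mor₃) := by simp
      _ = 0 := by rw [h0, comp_zero]
  obtain ⟨i₀, hi₀⟩ := hex
  refine ⟨Zf i₀, hZf i₀, ⟨T.mor₂ ≫ (φ.hom ≫ biproduct.π Zf i₀), ?_⟩,
    ⟨(biproduct.ι Zf i₀ ≫ φ.inv) ≫ T.mor₃, hi₀⟩⟩
  intro hπ
  obtain ⟨u, hu⟩ := Triangle.yoneda_exact₃ T hT (φ.hom ≫ biproduct.π Zf i₀) hπ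
  have hmu : ((biproduct.ι Zf i₀ ≫ φ.inv) ≫ T.mor₃) ≫ u = 𝟙 (Zf i₀) := by
    rw [Category.assoc, Category.assoc, ← hu]
    simp
  have hiso : IsIso ((biproduct.ι Zf i₀ ≫ φ.inv) ≫ T.mor₃) :=
    isIso_of_splitMono_indec _ u hmu (h1.shift 1) (hZf i₀).1
  have hz : T.mor₃ ≫ T.mor₁⟦(1:ℤ)⟧' = 0 := comp_distTriang_mor_zero₃₁ _ hT
  have hzz : T.mor₁⟦(1:ℤ)⟧' = 0 := by
    have h4 : ((biproduct.ι Zf i₀ ≫ φ.inv) ≫ T.mor₃) ≫ T.mor₁⟦(1:ℤ)⟧' = 0 := by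
      rw [Category.assoc, hz, comp_zero]
    rw [← cancel_epi ((biproduct.ι Zf i₀ ≫ φ.inv) ≫ T.mor₃), h4, comp_zero]
  exact hf (((shiftFunctor C (1:ℤ)).map_eq_zero_iff).1 hzz)

end Helpers

/-- in a non-degenerate block, for every indecomposable `X` there is a sequence
`X, X₁, X₂, X⟦1⟧` of indecomposables with nonzero morphisms between consecutive terms. -/
theorem stmt_11 (hblock : IsBlock C)
    (hnd : ∀ X : C, Indec C X → ∃ Y : C, Indec C Y ∧
        ((∃ f : Y ⟶ X, f ≠ 0 ∧ ¬ IsIso f) ∨ (∃ f : X ⟶ Y, f ≠ 0 ∧ ¬ IsIso f)))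
    (X : C) (hX : Indec C X) :
    ∃ X₁ X₂ : C, Indec C X₁ ∧ Indec C X₂ ∧
      (∃ f : X ⟶ X₁, f ≠ 0) ∧ (∃ f : X₁ ⟶ X₂, f ≠ 0) ∧
      (∃ f : X₂ ⟶ X⟦(1 : ℤ)⟧, f ≠ 0) := by
  obtain ⟨Y, hY, hcase⟩ := hnd X hX
  rcases hcase with ⟨f, hf, hni⟩ | ⟨f, hf, hni⟩
  · -- f : Y ⟶ X
    obtain ⟨Z, a, b, hT⟩ := Pretriangulated.distinguished_cocone_triangle f
    obtain ⟨W, hW, ⟨p, hp⟩, ⟨q, hq⟩⟩ := core_lemma hblock.2.1 _ hT hY hX hf hni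
    refine ⟨W, Y⟦(1:ℤ)⟧, hW, hY.shift 1, ⟨p, hp⟩, ⟨q, hq⟩, ⟨f⟦(1:ℤ)⟧', ?_⟩⟩
    intro h
    exact hf (((shiftFunctor C (1:ℤ)).map_eq_zero_iff).1 h)
  · -- f : X ⟶ Y
    obtain ⟨Z, g, h, hT⟩ := Pretriangulated.distinguished_cocone_triangle f
    obtain ⟨W, hW, ⟨p, hp⟩, ⟨q, hq⟩⟩ := core_lemma hblock.2.1 _ hT hX hY hf hni
    exact ⟨Y, W, hY, hW, ⟨f, hf⟩, ⟨p, hp⟩, ⟨q, hq⟩⟩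
end

section
/- Assume D is a block: D is nonzero, every object is a finite direct sum of indecomposables, and the indecomposable objects are path-connected. If there is a path from an indecomposable X to an indecomposable Y, then there exists an integer n ≥ 0 and a path from Y to X[n]. -/
open CategoryTheory CategoryTheory.Limits CategoryTheory.Pretriangulated

universe v u

variable (C : Type u) [Category.{v} C] [Preadditive C] [HasZeroObject C]
  [HasShift C ℤ] [∀ n : ℤ, (shiftFunctor C n).Additive] [Pretriangulated C]
  [HasFiniteBiproducts C]

variable {C}

variable (C)


section Stmt13Aux

/-- Transport indecomposability along an isomorphism. -/
lemma stmt13_indec_iso {X Y : C} (h : Indec C X) (e : X ≅ Y) : Indec C Y := by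
  obtain ⟨h1, h2⟩ := h
  exact ⟨fun hz => h1 (hz.of_iso e), fun A B e' => h2 A B (e.trans e')⟩

lemma stmt13_isZero_shift_iff (n : ℤ) (X : C) : IsZero ((X)⟦n⟧) ↔ IsZero X := by
  constructor
  · intro h
    rw [IsZero.iff_id_eq_zero] at h ⊢
    apply (shiftFunctor C n).map_injective
    rw [CategoryTheory.Functor.map_id, CategoryTheory.Functor.map_zero, h]
  · intro h
    rw [IsZero.iff_id_eq_zero] at h ⊢
    rw [← CategoryTheory.Functor.map_id (shiftFunctor C n) X, h,
      CategoryTheory.Functor.map_zero]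

lemma stmt13_indec_shift {X : C} (n : ℤ) (h : Indec C X) : Indec C ((X)⟦n⟧) := by
  obtain ⟨h1, h2⟩ := h
  constructor
  · intro hz
    exact h1 ((stmt13_isZero_shift_iff C n X).mp hz)
  · intro A B e
    have := preservesBinaryBiproducts_of_preservesBiproducts (shiftFunctor C (-n))
    have e2 : X ≅ (A)⟦-n⟧ ⊞ (B)⟦-n⟧ :=
      (shiftShiftNeg X n).symm ≪≫ (shiftFunctor C (-n)).mapIso e ≪≫
        (shiftFunctor C (-n)).mapBiprod A B
    rcases h2 _ _ e2 with hA | hB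
    · exact Or.inl ((stmt13_isZero_shift_iff C (-n) A).mp hA)
    · exact Or.inr ((stmt13_isZero_shift_iff C (-n) B).mp hB)

lemma stmt13_id_ne_zero {X : C} (h : Indec C X) : (𝟙 X) ≠ 0 :=
  fun hz => h.1 ((IsZero.iff_id_eq_zero X).mpr hz)

lemma stmt13_iso_hom_ne_zero {X Y : C} (h : ¬ IsZero X) (e : X ≅ Y) : e.hom ≠ 0 := by
  intro hz
  apply h
  rw [IsZero.iff_id_eq_zero, ← e.hom_inv_id, hz, zero_comp]

/-- One step of a path. -/
def Stmt13Step (A B : C) : Prop :=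
  Indec C A ∧ Indec C B ∧
    ((∃ g : A ⟶ B, g ≠ 0) ∨ Nonempty (B ≅ (A)⟦(1 : ℤ)⟧))

lemma stmt13_hasPath_refl {X : C} (h : Indec C X) : HasPath C X X :=
  ⟨0, fun _ => X, rfl, rfl, fun _ => h, fun i => i.elim0⟩

lemma stmt13_hasPath_snoc {X Y Z : C} (h : HasPath C X Y) (hs : Stmt13Step C Y Z) :
    HasPath C X Z := by
  obtain ⟨n, f, h0, hl, hi, hst⟩ := h
  refine ⟨n + 1, Fin.snoc f Z, ?_, ?_, ?_, ?_⟩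
  · have h00 : ((0 : Fin (n + 2))) = Fin.castSucc 0 := rfl
    rw [h00, Fin.snoc_castSucc, h0]
  · rw [Fin.snoc_last]
  · intro i
    induction i using Fin.lastCases with
    | last => rw [Fin.snoc_last]; exact hs.2.1
    | cast j => rw [Fin.snoc_castSucc]; exact hi j
  · intro i
    induction i using Fin.lastCases with
    | last =>
      rw [Fin.snoc_castSucc, hl, Fin.succ_last, Fin.snoc_last]
      exact hs.2.2
    | cast j =>
      have e1 : (Fin.snoc f Z : Fin (n + 2) → C) (Fin.castSucc j).castSucc = f j.castSucc :=
        Fin.snoc_castSucc ..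
      have e2 : (Fin.snoc f Z : Fin (n + 2) → C) (Fin.castSucc j).succ = f j.succ := by
        rw [Fin.succ_castSucc, Fin.snoc_castSucc]
      rw [e1, e2]
      exact hst j

lemma stmt13_hasPath_of_rtg {X Y : C} (hX : Indec C X)
    (h : Relation.ReflTransGen (Stmt13Step C) X Y) : HasPath C X Y := by
  induction h with
  | refl => exact stmt13_hasPath_refl C hX
  | tail _ hstep ih => exact stmt13_hasPath_snoc C ih hstep

lemma stmt13_rtg_aux (n : ℕ) (f : Fin (n + 1) → C)
    (hi : ∀ i, Indec C (f i))
    (hst : ∀ i : Fin n, (∃ g : f i.castSucc ⟶ f i.succ, g ≠ 0) ∨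
      Nonempty (f i.succ ≅ (f i.castSucc)⟦(1 : ℤ)⟧)) :
    Relation.ReflTransGen (Stmt13Step C) (f 0) (f (Fin.last n)) := by
  induction n with
  | zero => exact Relation.ReflTransGen.refl
  | succ m ih =>
    have h1 := ih (fun j => f j.castSucc) (fun j => hi _) (fun j => by
      exact hst j.castSucc)
    have h2 : Stmt13Step C (f (Fin.last m).castSucc) (f (Fin.last (m + 1))) := by
      rw [← Fin.succ_last]
      exact ⟨hi _, hi _, hst (Fin.last m)⟩
    exact h1.tail h2

lemma stmt13_rtg_of_hasPath {X Y : C} (h : HasPath C X Y) :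
    Indec C X ∧ Indec C Y ∧ Relation.ReflTransGen (Stmt13Step C) X Y := by
  obtain ⟨n, f, h0, hl, hi, hst⟩ := h
  refine ⟨h0 ▸ hi 0, hl ▸ hi _, ?_⟩
  rw [← h0, ← hl]
  exact stmt13_rtg_aux C n f hi hst

lemma stmt13_step_shift {A B : C} (m : ℤ) (h : Stmt13Step C A B) :
    Stmt13Step C ((A)⟦m⟧) ((B)⟦m⟧) := by
  obtain ⟨hA, hB, hs⟩ := h
  refine ⟨stmt13_indec_shift C m hA, stmt13_indec_shift C m hB, ?_⟩
  rcases hs with ⟨g, hg⟩ | he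
  · refine Or.inl ⟨(g)⟦m⟧', fun hz => hg ?_⟩
    apply (shiftFunctor C m).map_injective
    rw [hz, CategoryTheory.Functor.map_zero]
  · obtain ⟨e⟩ := he
    exact Or.inr ⟨(shiftFunctor C m).mapIso e ≪≫ shiftComm A 1 m⟩

lemma stmt13_rtg_shift {A B : C} (m : ℤ) (h : Relation.ReflTransGen (Stmt13Step C) A B) :
    Relation.ReflTransGen (Stmt13Step C) ((A)⟦m⟧) ((B)⟦m⟧) := by
  induction h with
  | refl => exact Relation.ReflTransGen.refl
  | tail _ hstep ih => exact ih.tail (stmt13_step_shift C m hstep)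

/-- Key lemma: a nonzero morphism between indecomposables can be reversed up to a
nonnegative shift. -/
lemma stmt13_key {X Y : C} (hdec : EveryObjectDecomposes C) (hX : Indec C X)
    (hY : Indec C Y) (g : X ⟶ Y) (hg : g ≠ 0) :
    ∃ m : ℤ, 0 ≤ m ∧ Relation.ReflTransGen (Stmt13Step C) Y ((X)⟦m⟧) := by
  obtain ⟨Z, v, w, hT⟩ := Pretriangulated.distinguished_cocone_triangle g
  by_cases hv : v = 0
  · obtain ⟨s, hs⟩ := Triangle.coyoneda_exact₂ _ hT (𝟙 Y) (by simp [hv]; exact comp_zero)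
    have hsne : s ≠ 0 := by
      intro hz
      exact stmt13_id_ne_zero C hY (by rw [hs, hz, zero_comp]; rfl)
    refine ⟨0, le_refl 0, Relation.ReflTransGen.single ?_⟩
    refine ⟨hY, stmt13_indec_shift C 0 hX,
      Or.inl ⟨s ≫ ((shiftFunctorZero C ℤ).app X).inv, ?_⟩⟩
    intro hz
    apply hsne
    have h2 := congrArg (fun q => q ≫ ((shiftFunctorZero C ℤ).app X).hom) hz
    exact (cancel_mono ((shiftFunctorZero C ℤ).app X).inv).mp (hz.trans zero_comp.symm)
  · obtain ⟨k, f, hfi, ⟨e⟩⟩ := hdec Z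
    have hex : ∃ j, v ≫ e.hom ≫ biproduct.π f j ≠ 0 := by
      by_contra hall
      push_neg at hall
      apply hv
      have hve : v ≫ e.hom = 0 := by
        apply biproduct.hom_ext
        intro j
        simpa using hall j
      have h2 := congrArg (fun q => q ≫ e.inv) hve
      simpa using h2
    obtain ⟨j, hvj⟩ := hex
    by_cases hwj : biproduct.ι f j ≫ e.inv ≫ w = 0
    · exfalso
      obtain ⟨t, ht⟩ := Triangle.coyoneda_exact₃ _ hT (biproduct.ι f j ≫ e.inv)
        (by exact (Category.assoc _ _ _).trans hwj)
      obtain ⟨t, ht⟩ : ∃ t : f j ⟶ Y, biproduct.ι f j ≫ e.inv = t ≫ v := ⟨t, ht⟩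
      have htv : t ≫ v ≫ e.hom ≫ biproduct.π f j = 𝟙 (f j) := by
        rw [← Category.assoc, ← ht]
        simp
      obtain ⟨K, p, w', hT2⟩ := Pretriangulated.distinguished_cocone_triangle t
      haveI hsm : IsSplitMono ((t)⟦(1 : ℤ)⟧') :=
        IsSplitMono.mk' ⟨(v ≫ e.hom ≫ biproduct.π f j)⟦(1 : ℤ)⟧', by
          rw [← CategoryTheory.Functor.map_comp, htv, CategoryTheory.Functor.map_id]⟩
      have hw' : w' = 0 := by
        have h31 := comp_distTriang_mor_zero₃₁ _ hT2
        rw [← cancel_mono ((t)⟦(1 : ℤ)⟧'), zero_comp]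
        exact h31
      obtain ⟨e2, he2₁, he2₂⟩ := exists_iso_binaryBiproduct_of_distTriang _ hT2 hw'
      rcases hY.2 _ _ e2 with hzj | hzK
      · exact (hfi j).1 hzj
      · have hinl : (biprod.fst : f j ⊞ K ⟶ f j) ≫ biprod.inl = 𝟙 _ := by
          apply biprod.hom_ext
          · simp
          · apply hzK.eq_of_tgt
        have hiso : IsIso t := by
          have heq : t = biprod.inl ≫ e2.inv := by
            rw [← he2₁, Category.assoc, e2.hom_inv_id, Category.comp_id]; rfl
          rw [heq]
          haveI : IsIso (biprod.inl : f j ⟶ f j ⊞ K) :=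
            ⟨biprod.fst, biprod.inl_fst, hinl⟩
          exact IsIso.comp_isIso' this (Iso.isIso_inv e2)
        have hgv : g ≫ v = 0 := comp_distTriang_mor_zero₁₂ _ hT
        have heq2 : v ≫ e.hom ≫ biproduct.π f j = inv t := by
          have h3 := congrArg (fun q => inv t ≫ q) htv
          rw [IsIso.inv_hom_id_assoc, Category.comp_id] at h3
          exact h3
        haveI hm : Mono (v ≫ e.hom ≫ biproduct.π f j) := by
          rw [heq2]; infer_instance
        apply hg
        rw [← cancel_mono (v ≫ e.hom ≫ biproduct.π f j), zero_comp,
          ← Category.assoc, hgv, zero_comp]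
    · refine ⟨1, by norm_num, ?_⟩
      have step1 : Stmt13Step C Y (f j) := ⟨hY, hfi j, Or.inl ⟨_, hvj⟩⟩
      have step2 : Stmt13Step C (f j) ((X)⟦(1 : ℤ)⟧) :=
        ⟨hfi j, stmt13_indec_shift C 1 hX, Or.inl ⟨biproduct.ι f j ≫ e.inv ≫ w, hwj⟩⟩
      exact (Relation.ReflTransGen.single step1).tail step2

end Stmt13Aux

/-- in a block, if there is a path from `X` to `Y` then there is a path from
`Y` to `X⟦n⟧` for some `n ≥ 0`. -/
theorem stmt_13 (hblock : IsBlock C) (X Y : C) (h : HasPath C X Y) :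
    ∃ n : ℤ, 0 ≤ n ∧ HasPath C Y (X⟦n⟧) := by
  obtain ⟨-, hdec, -⟩ := hblock
  obtain ⟨hX, hY, hrel⟩ := stmt13_rtg_of_hasPath C h
  have main : ∀ {B : C}, Relation.ReflTransGen (Stmt13Step C) X B →
      ∃ n : ℤ, 0 ≤ n ∧ Relation.ReflTransGen (Stmt13Step C) B ((X)⟦n⟧) := by
    intro B hrel
    induction hrel with
    | refl =>
      refine ⟨0, le_refl 0, Relation.ReflTransGen.single
        ⟨hX, stmt13_indec_shift C 0 hX,
          Or.inl ⟨(((shiftFunctorZero C ℤ).app X).symm).hom, ?_⟩⟩⟩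
      exact stmt13_iso_hom_ne_zero C hX.1 _
    | @tail b c hpre hstep ih =>
      obtain ⟨k, hk, hpath⟩ := ih
      obtain ⟨hb, hc, hs⟩ := hstep
      have hrev : ∃ m : ℤ, 0 ≤ m ∧ Relation.ReflTransGen (Stmt13Step C) c ((b)⟦m⟧) := by
        rcases hs with ⟨g, hg⟩ | he
        · exact stmt13_key C hdec hb hc g hg
        · obtain ⟨e⟩ := he
          refine ⟨1, by norm_num, Relation.ReflTransGen.single
            ⟨hc, stmt13_indec_shift C 1 hb, Or.inl ⟨e.hom, ?_⟩⟩⟩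
          exact stmt13_iso_hom_ne_zero C hc.1 e
      obtain ⟨m, hm, hrel2⟩ := hrev
      have hshift := stmt13_rtg_shift C m hpath
      have laststep : Stmt13Step C (((X)⟦k⟧)⟦m⟧) ((X)⟦k + m⟧) := by
        refine ⟨stmt13_indec_shift C m (stmt13_indec_shift C k hX),
          stmt13_indec_shift C (k + m) hX, Or.inl ⟨((shiftAdd X k m).symm).hom, ?_⟩⟩
        exact stmt13_iso_hom_ne_zero C (stmt13_indec_shift C m (stmt13_indec_shift C k hX)).1 _
      exact ⟨k + m, add_nonneg hk hm, (hrel2.trans hshift).tail laststep⟩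
  obtain ⟨n, hn, hr⟩ := main hrel
  exact ⟨n, hn, stmt13_hasPath_of_rtg C hY hr⟩
end

section
/- Assume D is a block: D is nonzero, every object is a finite direct sum of indecomposables, and the indecomposable objects are path-connected. Then for any two indecomposable objects X, Y of D there exists an integer n ≥ 0 and a path from X to Y[n]. -/
open CategoryTheory CategoryTheory.Limits CategoryTheory.Pretriangulated

universe v u

variable (C : Type u) [Category.{v} C] [Preadditive C] [HasZeroObject C]
  [HasShift C ℤ] [∀ n : ℤ, (shiftFunctor C n).Additive] [Pretriangulated C]
  [HasFiniteBiproducts C]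

variable {C}

section Aux

set_option linter.unusedSectionVars false

lemma isZero_of_shift {X : C} (n : ℤ) (h : IsZero (X⟦n⟧)) : IsZero X :=
  ((shiftFunctor C (-n)).map_isZero h).of_iso ((shiftEquiv C n).unitIso.app X)

lemma indec_shift {X : C} (h : Indec C X) (n : ℤ) : Indec C (X⟦n⟧) := by
  constructor
  · intro hz
    exact h.1 (isZero_of_shift n hz)
  · intro A B e
    have := preservesBinaryBiproduct_of_preservesBiproduct (shiftFunctor C (-n)) A B
    have e2 : X ≅ A⟦(-n : ℤ)⟧ ⊞ B⟦(-n : ℤ)⟧ :=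
      (shiftEquiv C n).unitIso.app X ≪≫ (shiftFunctor C (-n)).mapIso e ≪≫
        (shiftFunctor C (-n)).mapBiprod A B
    rcases h.2 _ _ e2 with hz | hz
    · exact Or.inl (isZero_of_shift (-n) hz)
    · exact Or.inr (isZero_of_shift (-n) hz)

lemma shift_map_ne_zero {A B : C} {g : A ⟶ B} (hg : g ≠ 0) (n : ℤ) :
    (shiftFunctor C n).map g ≠ 0 := fun hc =>
  hg ((shiftFunctor C n).map_injective (by simpa using hc))

lemma hasPath_single {X : C} (hX : Indec C X) : HasPath C X X :=
  ⟨0, fun _ => X, rfl, rfl, fun _ => hX, fun i => i.elim0⟩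

lemma HasPath.snoc {X Y Z : C} (h : HasPath C X Y) (hZ : Indec C Z)
    (hstep : (∃ g : Y ⟶ Z, g ≠ 0) ∨ Nonempty (Z ≅ Y⟦(1 : ℤ)⟧)) : HasPath C X Z := by
  obtain ⟨n, f, h0, hl, hind, hstp⟩ := h
  refine ⟨n + 1, Fin.snoc f Z, ?_, ?_, ?_, ?_⟩
  · rw [show (0 : Fin (n + 2)) = Fin.castSucc 0 by simp, Fin.snoc_castSucc]
    exact h0
  · simp
  · intro i
    induction i using Fin.lastCases with
    | last => simpa using hZ
    | cast j => simpa using hind j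
  · intro i
    induction i using Fin.lastCases with
    | last =>
      rw [Fin.succ_last]
      rw [show Fin.castSucc (Fin.last n) = Fin.castSucc (Fin.last n) from rfl]
      rw [Fin.snoc_castSucc, Fin.snoc_last, hl]
      exact hstep
    | cast j =>
      rw [Fin.succ_castSucc, Fin.snoc_castSucc, Fin.snoc_castSucc]
      exact hstp j

lemma HasPath.of_iso {X Y Z : C} (h : HasPath C X Y) (e : Y ≅ Z) (hZ : Indec C Z) :
    HasPath C X Z := by
  refine h.snoc hZ (Or.inl ⟨e.hom, fun h0 => hZ.1 ?_⟩)
  rw [IsZero.iff_id_eq_zero, ← e.inv_hom_id, h0, comp_zero]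

lemma HasPath.shift_succ {X Y : C} (h : HasPath C X (Y⟦(m : ℤ)⟧)) (hY : Indec C Y) :
    HasPath C X (Y⟦(m + 1 : ℤ)⟧) :=
  h.snoc (indec_shift hY (m + 1)) (Or.inr ⟨(shiftFunctorAdd C m 1).app Y⟩)

lemma HasPath.shift_up {X Y : C} (hY : Indec C Y) {m m' : ℤ} (hle : m ≤ m')
    (h : HasPath C X (Y⟦m⟧)) : HasPath C X (Y⟦m'⟧) := by
  exact Int.le_induction (motive := fun z _ => HasPath C X (Y⟦z⟧)) h
    (fun n hn ih => ih.shift_succ hY) m' hle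

lemma backward_extend (hdec : EveryObjectDecomposes C) {X A B : C} (hB : Indec C B)
    (hP : HasPath C X A) (g : B ⟶ A) (hg : g ≠ 0) : HasPath C X (B⟦(1 : ℤ)⟧) := by
  classical
  obtain ⟨Z0, h0, k0, hT0⟩ := distinguished_cocone_triangle g
  obtain ⟨n, f, hfind, ⟨e⟩⟩ := hdec Z0
  set h : A ⟶ ⨁ f := h0 ≫ e.hom with hh
  set k : (⨁ f) ⟶ B⟦(1 : ℤ)⟧ := e.inv ≫ k0 with hk
  have hT : Triangle.mk g h k ∈ distTriang C := by
    refine isomorphic_distinguished _ hT0 _ ?_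
    refine Triangle.isoMk _ _ (Iso.refl _) (Iso.refl _) e.symm ?_ ?_ ?_
    · show g ≫ 𝟙 A = 𝟙 B ≫ g
      simp
    · show (h0 ≫ e.hom) ≫ e.inv = 𝟙 A ≫ h0
      simp
    · show (e.inv ≫ k0) ≫ (shiftFunctor C 1).map (𝟙 B) = e.inv ≫ k0
      simp
  by_cases hcase : ∃ i, (h ≫ biproduct.π f i ≠ 0) ∧ (biproduct.ι f i ≫ k ≠ 0)
  · obtain ⟨i, h1, h2⟩ := hcase
    exact (hP.snoc (hfind i) (Or.inl ⟨h ≫ biproduct.π f i, h1⟩)).snoc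
      (indec_shift hB 1) (Or.inl ⟨biproduct.ι f i ≫ k, h2⟩)
  · push_neg at hcase
    set eZ : (⨁ f) ⟶ (⨁ f) :=
      biproduct.map (fun j => if h ≫ biproduct.π f j ≠ 0 then 𝟙 (f j) else 0) with heZ
    have he1 : h ≫ eZ = h := by
      ext j
      rw [Category.assoc, heZ, biproduct.map_π]
      split_ifs with hj
      · simp
      · rw [not_not] at hj
        simp [hj]
    have he2 : eZ ≫ k = 0 := by
      ext j
      rw [← Category.assoc, heZ, biproduct.ι_map]
      split_ifs with hj
      · simp [hcase j hj]
      · simp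
    obtain ⟨u, hu⟩ : ∃ u : (⨁ f) ⟶ A, eZ = u ≫ h := Triangle.coyoneda_exact₃ _ hT eZ he2
    have hfac : (𝟙 A - h ≫ u) ≫ h = 0 := by
      have hhh : (h ≫ u) ≫ h = h := by
        rw [Category.assoc, ← hu, he1]
      rw [Preadditive.sub_comp, Category.id_comp, hhh, sub_self]
    obtain ⟨v, hv⟩ : ∃ v : A ⟶ B, 𝟙 A - h ≫ u = v ≫ g :=
      Triangle.coyoneda_exact₂ _ hT _ hfac
    by_cases hv0 : v = 0
    · exfalso
      rw [hv0, zero_comp, sub_eq_zero] at hv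
      have hgh : g ≫ h = 0 := comp_distTriang_mor_zero₁₂ _ hT
      have : g = 0 := by
        calc g = g ≫ 𝟙 A := by rw [Category.comp_id]
        _ = (g ≫ h) ≫ u := by rw [hv]; simp [hh]
        _ = 0 := by rw [hgh, zero_comp]
      exact hg this
    · exact (hP.snoc hB (Or.inl ⟨v, hv0⟩)).snoc (indec_shift hB 1)
        (Or.inr ⟨Iso.refl _⟩)

end Aux

variable (C)

/-- in a block, for any indecomposables `X`, `Y` there is a path from `X` to
`Y⟦n⟧` for some `n ≥ 0`. -/
theorem stmt_14 (hblock : IsBlock C) (X Y : C) (hX : Indec C X) (hY : Indec C Y) :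
    ∃ n : ℤ, 0 ≤ n ∧ HasPath C X (Y⟦n⟧) := by
  classical
  obtain ⟨hne, hdec, hconn⟩ := hblock
  obtain ⟨n, f, h0, hl, hind, hstp⟩ := hconn X Y hX hY
  have key : ∀ j : ℕ, ∀ hj : j < n + 1, ∃ m : ℤ, 0 ≤ m ∧ HasPath C X ((f ⟨j, hj⟩)⟦m⟧) := by
    intro j
    induction j with
    | zero =>
      intro hj
      refine ⟨1, by norm_num, ?_⟩
      have hfx : f ⟨0, hj⟩ = X := h0
      rw [hfx]
      exact (hasPath_single hX).snoc (indec_shift hX 1) (Or.inr ⟨Iso.refl _⟩)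
    | succ j ih =>
      intro hj
      have hj' : j < n := Nat.lt_of_succ_lt_succ hj
      obtain ⟨m, hm, hp⟩ := ih (Nat.lt_of_succ_lt hj)
      have hstep := hstp ⟨j, hj'⟩
      have hA : Indec C (f ⟨j, Nat.lt_of_succ_lt hj⟩) := hind _
      have hB : Indec C (f ⟨j + 1, hj⟩) := hind _
      have hcs : (⟨j, hj'⟩ : Fin n).castSucc = (⟨j, Nat.lt_of_succ_lt hj⟩ : Fin (n + 1)) := rfl
      have hsu : (⟨j, hj'⟩ : Fin n).succ = (⟨j + 1, hj⟩ : Fin (n + 1)) := rfl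
      rw [hcs, hsu] at hstep
      rcases hstep with ⟨g, hg⟩ | ⟨g, hg⟩ | ⟨s, ⟨es⟩⟩
      · exact ⟨m, hm, hp.snoc (indec_shift hB m)
          (Or.inl ⟨(shiftFunctor C m).map g, shift_map_ne_zero hg m⟩)⟩
      · refine ⟨m + 1, by omega, ?_⟩
        have hb := backward_extend hdec (indec_shift hB m) hp
          ((shiftFunctor C m).map g) (shift_map_ne_zero hg m)
        exact hb.of_iso ((shiftFunctorAdd C m 1).app _).symm (indec_shift hB (m + 1))
      · refine ⟨max 0 (m - s), le_max_left _ _, ?_⟩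
        have hp2 : HasPath C X ((f ⟨j, Nat.lt_of_succ_lt hj⟩)⟦s + max 0 (m - s)⟧) :=
          hp.shift_up hA (by omega)
        refine hp2.of_iso ?_ (indec_shift hB _)
        exact (shiftFunctorAdd C s (max 0 (m - s))).app _ ≪≫
          ((shiftFunctor C (max 0 (m - s))).mapIso es).symm
  obtain ⟨m, hm, hp⟩ := key n (Nat.lt_succ_self n)
  have hfy : f ⟨n, Nat.lt_succ_self n⟩ = Y := hl
  rw [hfy] at hp
  exact ⟨m, hm, hp⟩
end
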